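/- Let a : R ⥤ A and b : R ⥤ B be functors such that: a is an equivalence of categories and an isofibration, a admits a section s : A ⥤ R with a ∘ s = 𝟭_A, and the induced functor (a, b) : R ⥤ A × B is a discrete isofibration. Set f := s ⋙ b : A ⥤ B. Then there is an isomorphism of categories η : R ≅ P_f, where P_f is the iso-comma category of f, such that p ∘ η = a and q ∘ η = b, where p : P_f ⥤ A and q : P_f ⥤ B are the iso-comma projections. Hence a span (a, b) is isomorphic over A and B to the canonical iso-comma span of some functor A ⥤ B if and only if a is a surjective equivalence and (a, b) is a discrete isofibration. -/

import Mathlib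

open CategoryTheory CategoryTheory.Limits

universe v u

variable {A : Type u} [Category.{v} A] {B : Type u} [Category.{v} B]

/-- A functor is an isofibration if every isomorphism whose domain is in the image
can be lifted. -/
def Isofibration (F : A ⥤ B) : Prop :=
  ∀ (a : A) (b : B) (β : F.obj a ≅ b),
    ∃ (a' : A) (α : a ≅ a') (h : F.obj a' = b), F.mapIso α ≪≫ eqToIso h = β

/-- A functor is a discrete isofibration if every such lift exists uniquely. -/
def DiscreteIsofibration (F : A ⥤ B) : Prop :=
  ∀ (a : A) (b : B) (β : F.obj a ≅ b),
    ∃! l : Σ a' : A, a ≅ a', ∃ h : F.obj l.1 = b, F.mapIso l.2 ≪≫ eqToIso h = β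

/-- The iso-comma category of a functor `F : A ⥤ B`: objects are triples `(a, b, β)` with
`β : F.obj a ≅ b`. -/
abbrev IsoComma (F : A ⥤ B) : Type _ :=
  ObjectProperty.FullSubcategory (fun X : Comma F (𝟭 B) => IsIso X.hom)

namespace IsoComma

variable (F : A ⥤ B)

/-- First projection of the iso-comma category. -/
def p : IsoComma F ⥤ A :=
  ObjectProperty.ι _ ⋙ Comma.fst F (𝟭 B)

/-- Second projection of the iso-comma category. -/
def q : IsoComma F ⥤ B :=
  ObjectProperty.ι _ ⋙ Comma.snd F (𝟭 B)

end IsoComma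


section Aux

universe v₁ u₁ v₂ u₂

def Isofib' {C : Type u₁} [Category.{v₁} C] {D : Type u₂} [Category.{v₂} D] (F : C ⥤ D) : Prop :=
  ∀ (a : C) (b : D) (β : F.obj a ≅ b),
    ∃ (a' : C) (α : a ≅ a') (h : F.obj a' = b), F.mapIso α ≪≫ eqToIso h = β

def DiscIsofib' {C : Type u₁} [Category.{v₁} C] {D : Type u₂} [Category.{v₂} D] (F : C ⥤ D) : Prop :=
  ∀ (a : C) (b : D) (β : F.obj a ≅ b),
    ∃! l : Σ a' : C, a ≅ a', ∃ h : F.obj l.1 = b, F.mapIso l.2 ≪≫ eqToIso h = β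


section helpers
variable {F : A ⥤ B}

lemma prod_eqToHom_fst {P Q : A × B} (h : P = Q) :
    (eqToHom h).1 = eqToHom (congrArg Prod.fst h) := by cases h; rfl

lemma prod_eqToHom_snd {P Q : A × B} (h : P = Q) :
    (eqToHom h).2 = eqToHom (congrArg Prod.snd h) := by cases h; rfl

lemma comma_ext {X Y : Comma F (𝟭 B)} (h1 : X.left = Y.left)
    (h2 : X.right = Y.right)
    (h3 : X.hom ≫ eqToHom h2 = eqToHom (congrArg F.obj h1) ≫ Y.hom) : X = Y := by
  obtain ⟨l, r, f⟩ := X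
  obtain ⟨l', r', f'⟩ := Y
  dsimp at h1 h2
  subst h1; subst h2
  simp only [eqToHom_refl, Category.comp_id, Category.id_comp] at h3
  rw [h3]

lemma fs_ext {Z W : IsoComma F} (h : Z.obj = W.obj) : Z = W := by
  cases Z; cases W; cases h; rfl

def isoMk {X Y : IsoComma F} (e₁ : X.obj.left ≅ Y.obj.left)
    (e₂ : X.obj.right ≅ Y.obj.right)
    (w : F.map e₁.hom ≫ Y.obj.hom = X.obj.hom ≫ e₂.hom) : X ≅ Y where
  hom := ⟨e₁.hom, e₂.hom, by simpa using w⟩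
  inv := ⟨e₁.inv, e₂.inv, by
    simp only [Functor.id_map]
    rw [Iso.eq_comp_inv, Category.assoc, ← w, ← Functor.map_comp_assoc]
    simp⟩
  hom_inv_id := by
    apply InducedCategory.hom_ext
    apply CommaMorphism.ext
    · exact e₁.hom_inv_id
    · exact e₂.hom_inv_id
  inv_hom_id := by
    apply InducedCategory.hom_ext
    apply CommaMorphism.ext
    · exact e₁.inv_hom_id
    · exact e₂.inv_hom_id

/-- iso of left components of an iso in IsoComma -/
def lIso {X Y : IsoComma F} (α : X ≅ Y) : X.obj.left ≅ Y.obj.left where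
  hom := α.hom.hom.left
  inv := α.inv.hom.left
  hom_inv_id := congrArg (fun f => f.hom.left) α.hom_inv_id
  inv_hom_id := congrArg (fun f => f.hom.left) α.inv_hom_id

def rIso {X Y : IsoComma F} (α : X ≅ Y) : X.obj.right ≅ Y.obj.right where
  hom := α.hom.hom.right
  inv := α.inv.hom.right
  hom_inv_id := congrArg (fun f => f.hom.right) α.hom_inv_id
  inv_hom_id := congrArg (fun f => f.hom.right) α.inv_hom_id

end helpers

namespace IsoComma
variable (F : A ⥤ B)

def lift : A ⥤ IsoComma F where
  obj x := ⟨⟨x, F.obj x, 𝟙 _⟩, inferInstance⟩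
  map u := ⟨u, F.map u, by simp⟩

noncomputable def equiv : IsoComma F ≌ A where
  functor := p F
  inverse := lift F
  unitIso := (NatIso.ofComponents (fun (X : IsoComma F) =>
    haveI : IsIso X.obj.hom := X.property
    (_root_.isoMk (Iso.refl _) (@asIso _ _ _ _ X.obj.hom this)
      (by show F.map (𝟙 _) ≫ X.obj.hom = 𝟙 _ ≫ X.obj.hom; simp) : (p F ⋙ lift F).obj X ≅ X))
    (fun {X Y} f => by
      apply InducedCategory.hom_ext
      apply CommaMorphism.ext
      · show f.hom.left ≫ 𝟙 _ = 𝟙 _ ≫ f.hom.left; simp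
      · show F.map f.hom.left ≫ Y.obj.hom = X.obj.hom ≫ f.hom.right
        simpa using f.hom.w)).symm
  counitIso := NatIso.ofComponents (fun x => Iso.refl x)
    (fun {X Y} f => by show f ≫ 𝟙 _ = 𝟙 _ ≫ f; simp)
  functor_unitIso_comp := by
    intro X
    show (𝟙 X.obj.left ≫ 𝟙 _ : _ ⟶ _) = 𝟙 _
    simp

end IsoComma

section fib
variable (F : A ⥤ B)

lemma isofib_p : Isofib' (IsoComma.p F) := by
  intro X x' γ
  haveI : IsIso X.obj.hom := X.property
  refine ⟨⟨⟨x', X.obj.right, F.map γ.inv ≫ X.obj.hom⟩,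
    by dsimp; exact IsIso.comp_isIso' (Functor.map_isIso F γ.inv) X.property⟩,
    isoMk γ (Iso.refl _) (by dsimp only; exact (γ.map_hom_inv_id_assoc F _).trans (Category.comp_id _).symm), rfl, ?_⟩
  apply Iso.ext
  simp only [Iso.trans_hom, Functor.mapIso_hom, eqToIso_refl, Iso.refl_hom, Category.comp_id]
  exact Category.comp_id _

lemma discrete_pq : DiscIsofib' ((IsoComma.p F).prod' (IsoComma.q F)) := by
  intro X xy β
  obtain ⟨⟨bh1, bh2⟩, ⟨bi1, bi2⟩, bhi, bih⟩ := β
  change X.obj.left ⟶ xy.1 at bh1; change X.obj.right ⟶ xy.2 at bh2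
  change xy.1 ⟶ X.obj.left at bi1; change xy.2 ⟶ X.obj.right at bi2
  have ghi : bh1 ≫ bi1 = 𝟙 X.obj.left := congrArg Prod.fst bhi
  have gih : bi1 ≫ bh1 = 𝟙 xy.1 := congrArg Prod.fst bih
  have dhi : bh2 ≫ bi2 = 𝟙 X.obj.right := congrArg Prod.snd bhi
  have dih : bi2 ≫ bh2 = 𝟙 xy.2 := congrArg Prod.snd bih
  have γ : X.obj.left ≅ xy.1 := ⟨bh1, bi1, ghi, gih⟩
  haveI : IsIso X.obj.hom := X.property
  haveI : IsIso bh2 := ⟨bi2, dhi, dih⟩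
  haveI : IsIso bi1 := ⟨bh1, gih, ghi⟩
  refine ⟨⟨⟨⟨xy.1, xy.2, F.map bi1 ≫ X.obj.hom ≫ bh2⟩,
    by dsimp; exact IsIso.comp_isIso' (Functor.map_isIso F bi1) (IsIso.comp_isIso' X.property ‹IsIso bh2›)⟩,
    isoMk ⟨bh1, bi1, ghi, gih⟩ ⟨bh2, bi2, dhi, dih⟩
      (by rw [← Functor.map_comp_assoc, ghi]; simp)⟩, ⟨rfl, ?_⟩, ?_⟩
  · apply Iso.ext
    exact Prod.ext (Category.comp_id bh1) (Category.comp_id bh2)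
  · rintro ⟨X'', α''⟩ ⟨h'', hcond⟩
    have e1 : X''.obj.left = xy.1 := congrArg Prod.fst h''
    have e2 : X''.obj.right = xy.2 := congrArg Prod.snd h''
    have hc := congrArg Iso.hom hcond
    have hl : α''.hom.hom.left ≫ eqToHom e1 = bh1 := by
      have h : α''.hom.hom.left ≫ (eqToHom h'').1 = bh1 := congrArg Prod.fst hc
      rwa [prod_eqToHom_fst h''] at h
    have hr : α''.hom.hom.right ≫ eqToHom e2 = bh2 := by
      have h : α''.hom.hom.right ≫ (eqToHom h'').2 = bh2 := congrArg Prod.snd hc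
      rwa [prod_eqToHom_snd h''] at h
    have hlIso : lIso α'' = (⟨bh1, bi1, ghi, gih⟩ : X.obj.left ≅ xy.1) ≪≫ eqToIso e1.symm := by
      apply Iso.ext
      show α''.hom.hom.left = bh1 ≫ eqToHom e1.symm
      rw [← hl]; simp
    have hrIso : rIso α'' = (⟨bh2, bi2, dhi, dih⟩ : X.obj.right ≅ xy.2) ≪≫ eqToIso e2.symm := by
      apply Iso.ext
      show α''.hom.hom.right = bh2 ≫ eqToHom e2.symm
      rw [← hr]; simp
    have hinvl : α''.inv.hom.left = eqToHom e1 ≫ bi1 := by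
      have h := congrArg Iso.inv hlIso; simpa [lIso] using h
    have hinvr : α''.inv.hom.right = eqToHom e2 ≫ bi2 := by
      have h := congrArg Iso.inv hrIso; simpa [rIso] using h
    have hw : F.map α''.inv.hom.left ≫ X.obj.hom = X''.obj.hom ≫ α''.inv.hom.right := by
      simpa using α''.inv.hom.w
    rw [hinvl, hinvr] at hw
    have hXhom : X''.obj.hom ≫ eqToHom e2 =
        eqToHom (congrArg F.obj e1) ≫ F.map bi1 ≫ X.obj.hom ≫ bh2 := by
      calc X''.obj.hom ≫ eqToHom e2 = (X''.obj.hom ≫ eqToHom e2 ≫ bi2) ≫ bh2 := by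
            rw [Category.assoc, Category.assoc, dih, Category.comp_id]
        _ = (F.map (eqToHom e1 ≫ bi1) ≫ X.obj.hom) ≫ bh2 := by rw [← hw]
        _ = eqToHom (congrArg F.obj e1) ≫ F.map bi1 ≫ X.obj.hom ≫ bh2 := by
            rw [F.map_comp, eqToHom_map]; simp
    have hobj : X'' = (⟨⟨xy.1, xy.2, F.map bi1 ≫ X.obj.hom ≫ bh2⟩,
        by dsimp; infer_instance⟩ : IsoComma F) := by
      apply fs_ext
      exact comma_ext e1 e2 (by simpa using hXhom)
    subst hobj
    refine congrArg (Sigma.mk _) ?_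
    apply Iso.ext
    apply InducedCategory.hom_ext
    apply CommaMorphism.ext
    · show α''.hom.hom.left = bh1
      have he : eqToHom e1 = 𝟙 xy.1 := rfl
      rw [he, Category.comp_id] at hl
      exact hl
    · show α''.hom.hom.right = bh2
      have he : eqToHom e2 = 𝟙 xy.2 := rfl
      rw [he, Category.comp_id] at hr
      exact hr

end fib
section transfer
universe w₁ t₁ w₂ t₂ w₃ t₃
variable {C : Type w₁} [Category.{t₁} C] {D : Type w₂} [Category.{t₂} D]
  {E : Type w₃} [Category.{t₃} E]

lemma strict_isEquivalence (G : C ⥤ D) (G' : D ⥤ C)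
    (h1 : G ⋙ G' = 𝟭 C) (h2 : G' ⋙ G = 𝟭 D) : G.IsEquivalence :=
  (CategoryTheory.Equivalence.mk G G' (eqToIso h1.symm) (eqToIso h2)).isEquivalence_functor

lemma obj_injective (G : C ⥤ D) (G' : D ⥤ C) (h1 : G ⋙ G' = 𝟭 C)
    {x y : C} (h : G.obj x = G.obj y) : x = y := by
  have hx := Functor.congr_obj h1 x
  have hy := Functor.congr_obj h1 y
  dsimp at hx hy
  rw [← hx, ← hy, h]

lemma isofib_comp (G : C ⥤ D) (G' : D ⥤ C) (h1 : G ⋙ G' = 𝟭 C) (h2 : G' ⋙ G = 𝟭 D)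
    (K : D ⥤ E) (hK : Isofib' K) : Isofib' (G ⋙ K) := by
  haveI := strict_isEquivalence G G' h1 h2
  intro c e β
  obtain ⟨d', α, h, hcond⟩ := hK (G.obj c) e β
  have hchom : K.map α.hom ≫ eqToHom h = β.hom := by
    simpa using congrArg Iso.hom hcond
  have hobj : G.obj (G'.obj d') = d' := Functor.congr_obj h2 d'
  have h' : K.obj (G.obj (G'.obj d')) = e := by rw [hobj]; exact h
  refine ⟨G'.obj d', G.preimageIso (α ≪≫ eqToIso hobj.symm), h', ?_⟩
  apply Iso.ext
  simp only [Iso.trans_hom, Functor.mapIso_hom, eqToIso.hom, Functor.comp_map]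
  have hmap : G.map (G.preimageIso (α ≪≫ eqToIso hobj.symm)).hom =
      α.hom ≫ eqToHom hobj.symm := by simp
  rw [hmap, K.map_comp, eqToHom_map, Category.assoc, eqToHom_trans, hchom]

lemma disc_comp (G : C ⥤ D) (G' : D ⥤ C) (h1 : G ⋙ G' = 𝟭 C) (h2 : G' ⋙ G = 𝟭 D)
    (K : D ⥤ E) (hK : DiscIsofib' K) : DiscIsofib' (G ⋙ K) := by
  haveI := strict_isEquivalence G G' h1 h2
  intro c e β
  obtain ⟨w, hw, huniq⟩ := hK (G.obj c) e β
  obtain ⟨h, hcond⟩ := hw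
  have hchom : K.map w.2.hom ≫ eqToHom h = β.hom := by
    simpa using congrArg Iso.hom hcond
  have hobj : G.obj (G'.obj w.1) = w.1 := Functor.congr_obj h2 w.1
  have h' : K.obj (G.obj (G'.obj w.1)) = e := by rw [hobj]; exact h
  have key : ∀ l : Σ c' : C, c ≅ c',
      (∃ hh : (G ⋙ K).obj l.1 = e, (G ⋙ K).mapIso l.2 ≪≫ eqToIso hh = β) →
      (⟨G.obj l.1, G.mapIso l.2⟩ : Σ d', G.obj c ≅ d') = w := by
    rintro ⟨c', α⟩ ⟨hh, hcond'⟩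
    exact huniq ⟨G.obj c', G.mapIso α⟩ ⟨hh, Iso.ext (congrArg Iso.hom hcond')⟩
  have hcanon : ∃ hh : (G ⋙ K).obj (G'.obj w.1) = e,
      (G ⋙ K).mapIso (G.preimageIso (w.2 ≪≫ eqToIso hobj.symm)) ≪≫ eqToIso hh = β := by
    refine ⟨h', ?_⟩
    apply Iso.ext
    simp only [Iso.trans_hom, Functor.mapIso_hom, eqToIso.hom, Functor.comp_map]
    have hmap : G.map (G.preimageIso (w.2 ≪≫ eqToIso hobj.symm)).hom =
        w.2.hom ≫ eqToHom hobj.symm := by simp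
    rw [hmap, K.map_comp, eqToHom_map, Category.assoc, eqToHom_trans, hchom]
  refine ⟨⟨G'.obj w.1, G.preimageIso (w.2 ≪≫ eqToIso hobj.symm)⟩, hcanon, ?_⟩
  rintro ⟨c₂, α₂⟩ hprop
  have k2 := key ⟨c₂, α₂⟩ hprop
  have kc := key ⟨G'.obj w.1, G.preimageIso (w.2 ≪≫ eqToIso hobj.symm)⟩ hcanon
  rw [← kc] at k2
  have hfst : G.obj c₂ = G.obj (G'.obj w.1) := congrArg Sigma.fst k2
  have hco : c₂ = G'.obj w.1 := obj_injective G G' h1 hfst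
  subst hco
  refine congrArg (Sigma.mk _) ?_
  have hsnd : G.mapIso α₂ = G.mapIso (G.preimageIso (w.2 ≪≫ eqToIso hobj.symm)) :=
    eq_of_heq (Sigma.ext_iff.mp k2).2
  apply Iso.ext
  apply G.map_injective
  exact congrArg Iso.hom hsnd

lemma exists_strict_inverse (F : C ⥤ D) [F.Full] [F.Faithful]
    (hF : Function.Bijective F.obj) :
    ∃ G : D ⥤ C, F ⋙ G = 𝟭 C ∧ G ⋙ F = 𝟭 D := by
  choose g hg using hF.2
  have hgF : ∀ x : C, g (F.obj x) = x := fun x => hF.1 (hg (F.obj x))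
  refine ⟨⟨g, fun {X Y} v => F.preimage (eqToHom (hg X) ≫ v ≫ eqToHom (hg Y).symm),
    ?_, ?_⟩, ?_, ?_⟩
  · intro X
    apply F.map_injective
    simp
  · intro X Y Z u v
    apply F.map_injective
    simp
  · refine CategoryTheory.Functor.ext hgF (fun X Y u => ?_)
    apply F.map_injective
    simp [eqToHom_map]
  · refine CategoryTheory.Functor.ext (fun X => hg X) (fun X Y v => ?_)
    show F.map (F.preimage _) = _
    simp

end transfer
section mainsec
variable {F : A ⥤ B}

lemma comma_hom_congr {X Y : Comma F (𝟭 B)} (h : X = Y) :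
    X.hom = eqToHom (congrArg (fun Z => F.obj (Comma.left Z)) h) ≫ Y.hom ≫
      eqToHom (congrArg Comma.right h).symm := by cases h; simp

variable {R : Type u} [Category.{v} R]

lemma exists_section (a : R ⥤ A) (ha : a.IsEquivalence) (hfib : Isofib' a) :
    ∃ s : A ⥤ R, s ⋙ a = 𝟭 A := by
  haveI := ha
  have hsur : ∀ x : A, ∃ r, a.obj r = x := by
    intro x
    obtain ⟨r', _, h, _⟩ := hfib (a.objPreimage x) x (a.objObjPreimageIso x)
    exact ⟨r', h⟩
  choose g hg using hsur
  refine ⟨⟨g, fun {X Y} u => a.preimage (eqToHom (hg X) ≫ u ≫ eqToHom (hg Y).symm),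
    ?_, ?_⟩, ?_⟩
  · intro X; apply a.map_injective; simp
  · intro X Y Z u v; apply a.map_injective; simp
  · refine CategoryTheory.Functor.ext hg (fun X Y u => ?_)
    show a.map (a.preimage _) = _
    simp

lemma main_span (a : R ⥤ A) (b : R ⥤ B) (ha : a.IsEquivalence)
    (s : A ⥤ R) (hs : s ⋙ a = 𝟭 A) (hd : DiscIsofib' (a.prod' b)) :
    ∃ (η : R ⥤ IsoComma (s ⋙ b)) (θ : IsoComma (s ⋙ b) ⥤ R),
        η ⋙ θ = 𝟭 R ∧ θ ⋙ η = 𝟭 (IsoComma (s ⋙ b)) ∧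
        η ⋙ IsoComma.p (s ⋙ b) = a ∧ η ⋙ IsoComma.q (s ⋙ b) = b := by
  haveI := ha
  have hsa : ∀ x, a.obj (s.obj x) = x := fun x => Functor.congr_obj hs x
  let σ : ∀ r, s.obj (a.obj r) ≅ r := fun r => a.preimageIso (eqToIso (hsa (a.obj r)))
  have hσ : ∀ r, a.map (σ r).hom = eqToHom (hsa (a.obj r)) := fun r => by simp [σ]
  have hσi : ∀ r, a.map (σ r).inv = eqToHom (hsa (a.obj r)).symm := fun r => by simp [σ]
  have hnat : ∀ {r r'} (u : r ⟶ r'), s.map (a.map u) ≫ (σ r').hom = (σ r).hom ≫ u := by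
    intro r r' u
    apply a.map_injective
    rw [a.map_comp, a.map_comp, hσ, hσ]
    have := Functor.congr_hom hs (a.map u)
    simp only [Functor.comp_map] at this
    rw [this]
    simp
  let η : R ⥤ IsoComma (s ⋙ b) :=
  { obj := fun r => ⟨⟨a.obj r, b.obj r, b.map (σ r).hom⟩, by dsimp; infer_instance⟩
    map := fun {r r'} u => ⟨a.map u, b.map u, by
      show (s ⋙ b).map (a.map u) ≫ b.map (σ r').hom = b.map (σ r).hom ≫ (𝟭 B).map (b.map u)
      dsimp only [Functor.comp_map, Functor.id_map]
      rw [← b.map_comp, ← b.map_comp, hnat]⟩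
    map_id := fun r => by
      apply InducedCategory.hom_ext
      apply CommaMorphism.ext
      · show a.map (𝟙 r) = 𝟙 _
        simp
      · show b.map (𝟙 r) = 𝟙 _
        simp
    map_comp := fun u v => by
      apply InducedCategory.hom_ext
      apply CommaMorphism.ext
      · show a.map (u ≫ v) = a.map u ≫ a.map v
        simp
      · show b.map (u ≫ v) = b.map u ≫ b.map v
        simp }
  haveI : η.Faithful := ⟨fun {r r'} {w w'} hww => by
    apply a.map_injective
    exact congrArg (fun f => f.hom.left) hww⟩
  haveI : η.Full := ⟨fun {r r'} m => by
    refine ⟨(σ r).inv ≫ s.map m.hom.left ≫ (σ r').hom, ?_⟩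
    apply InducedCategory.hom_ext
    apply CommaMorphism.ext
    · show a.map ((σ r).inv ≫ s.map m.hom.left ≫ (σ r').hom) = m.hom.left
      rw [a.map_comp, a.map_comp, hσi, hσ]
      have := Functor.congr_hom hs m.hom.left
      simp only [Functor.comp_map] at this
      rw [this]
      simp
    · show b.map ((σ r).inv ≫ s.map m.hom.left ≫ (σ r').hom) = m.hom.right
      have hw : (s ⋙ b).map m.hom.left ≫ b.map (σ r').hom = b.map (σ r).hom ≫ m.hom.right := by
        simpa using m.hom.w
      simp only [Functor.comp_map] at hw
      rw [b.map_comp, b.map_comp, hw, ← b.map_comp_assoc]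
      simp⟩
  have hinj : Function.Injective η.obj := by
    intro r₁ r₂ heq
    have hobj : (η.obj r₁).obj = (η.obj r₂).obj := congrArg ObjectProperty.FullSubcategory.obj heq
    have e1 : a.obj r₁ = a.obj r₂ := congrArg Comma.left hobj
    have e2 : b.obj r₁ = b.obj r₂ := congrArg Comma.right hobj
    have ehom : b.map (σ r₁).hom =
        eqToHom (congrArg (fun x => b.obj (s.obj x)) e1) ≫ b.map (σ r₂).hom ≫
          eqToHom e2.symm := comma_hom_congr hobj
    obtain ⟨w, hw, huniq⟩ := hd (s.obj (a.obj r₁)) ((a.prod' b).obj r₁)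
      ((a.prod' b).mapIso (σ r₁))
    have k1 : (⟨r₁, σ r₁⟩ : Σ r', s.obj (a.obj r₁) ≅ r') = w := by
      refine huniq _ ⟨rfl, ?_⟩
      apply Iso.ext
      exact Category.comp_id _
    have h2 : (a.prod' b).obj r₂ = (a.prod' b).obj r₁ := by
      show (a.obj r₂, b.obj r₂) = (a.obj r₁, b.obj r₁)
      rw [e1, e2]
    have k2 : (⟨r₂, eqToIso (congrArg s.obj e1) ≪≫ σ r₂⟩ :
        Σ r', s.obj (a.obj r₁) ≅ r') = w := by
      refine huniq _ ⟨h2, ?_⟩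
      apply Iso.ext
      apply Prod.ext
      · show a.map (eqToHom (congrArg s.obj e1) ≫ (σ r₂).hom) ≫ (eqToHom h2).1 =
          a.map (σ r₁).hom
        rw [prod_eqToHom_fst h2, a.map_comp, eqToHom_map, hσ, hσ]
        simp [eqToHom_trans]
      · show b.map (eqToHom (congrArg s.obj e1) ≫ (σ r₂).hom) ≫ (eqToHom h2).2 =
          b.map (σ r₁).hom
        rw [prod_eqToHom_snd h2, b.map_comp, eqToHom_map, ehom]
        simp [eqToHom_trans]
    rw [← k2] at k1
    exact congrArg Sigma.fst k1
  have hsurj : Function.Surjective η.obj := by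
    rintro ⟨⟨x, y, φ⟩, hiso⟩
    haveI : IsIso φ := hiso
    let βAB : (a.prod' b).obj (s.obj x) ≅ (x, y) :=
      { hom := (eqToHom (hsa x), φ)
        inv := (eqToHom (hsa x).symm, inv φ)
        hom_inv_id := by
          apply Prod.ext
          · show eqToHom (hsa x) ≫ eqToHom (hsa x).symm = 𝟙 (a.obj (s.obj x))
            simp
          · show φ ≫ inv φ = 𝟙 _
            simp
        inv_hom_id := by
          apply Prod.ext
          · show eqToHom (hsa x).symm ≫ eqToHom (hsa x) = 𝟙 x
            simp
          · show inv φ ≫ φ = 𝟙 _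
            simp }
    obtain ⟨⟨r', α⟩, ⟨h, hcond⟩, _⟩ := hd (s.obj x) (x, y) βAB
    have e1 : a.obj r' = x := congrArg Prod.fst h
    have e2 : b.obj r' = y := congrArg Prod.snd h
    have hc := congrArg Iso.hom hcond
    have hfst : a.map α.hom ≫ (eqToHom h).1 = eqToHom (hsa x) := congrArg Prod.fst hc
    have hsnd : b.map α.hom ≫ (eqToHom h).2 = φ := congrArg Prod.snd hc
    rw [prod_eqToHom_fst h] at hfst
    rw [prod_eqToHom_snd h] at hsnd
    refine ⟨r', ?_⟩
    apply fs_ext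
    refine comma_ext e1 e2 ?_
    show b.map (σ r').hom ≫ eqToHom e2 = eqToHom (congrArg (s ⋙ b).obj e1) ≫ φ
    have hσα : (σ r').hom = eqToHom (congrArg s.obj e1) ≫ α.hom := by
      apply a.map_injective
      rw [hσ, a.map_comp, eqToHom_map]
      have hα : a.map α.hom = eqToHom (hsa x) ≫ eqToHom e1.symm := by
        rw [← hfst]; simp
      rw [hα]
      simp [eqToHom_trans]
    rw [hσα, b.map_comp, eqToHom_map, Category.assoc, hsnd]
  obtain ⟨θ, h1, h2⟩ := exists_strict_inverse η ⟨hinj, hsurj⟩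
  exact ⟨η, θ, h1, h2, rfl, rfl⟩

end mainsec

end Aux

/-- Theorem 5.4 (essential image characterisation): if `a : R ⥤ A` is a surjective
equivalence with a chosen section `s`, and the span `(a, b) : R ⥤ A × B` is a discrete
isofibration, then the span `(a, b)` is isomorphic, over `A` and `B`, to the canonical
iso-comma span of `f := s ⋙ b`.  Consequently, a span is isomorphic over `A` and `B` to
the iso-comma span of some functor `A ⥤ B` if and only if its first leg is a surjective
equivalence and the span is a discrete isofibration. -/
theorem span_isomorphic_to_isoComma_iff
    {R : Type u} [Category.{v} R] (a : R ⥤ A) (b : R ⥤ B)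
    (ha : a.IsEquivalence) (hfib : Isofibration a)
    (s : A ⥤ R) (hs : s ⋙ a = 𝟭 A)
    (hd : DiscreteIsofibration (a.prod' b)) :
    (∃ (η : R ⥤ IsoComma (s ⋙ b)) (θ : IsoComma (s ⋙ b) ⥤ R),
        η ⋙ θ = 𝟭 R ∧ θ ⋙ η = 𝟭 (IsoComma (s ⋙ b)) ∧
        η ⋙ IsoComma.p (s ⋙ b) = a ∧ η ⋙ IsoComma.q (s ⋙ b) = b) ∧
    (∀ (R' : Type u) (_ : Category.{v} R') (a' : R' ⥤ A) (b' : R' ⥤ B),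
      (∃ (f : A ⥤ B) (η : R' ⥤ IsoComma f) (θ : IsoComma f ⥤ R'),
          η ⋙ θ = 𝟭 R' ∧ θ ⋙ η = 𝟭 (IsoComma f) ∧
          η ⋙ IsoComma.p f = a' ∧ η ⋙ IsoComma.q f = b') ↔
        (a'.IsEquivalence ∧ Isofibration a' ∧ DiscreteIsofibration (a'.prod' b'))) := by
  constructor
  · exact main_span a b ha s hs hd
  · intro R' _ a' b'
    constructor
    · rintro ⟨f, η, θ, h1, h2, hp, hq⟩
      haveI hηe : η.IsEquivalence := strict_isEquivalence η θ h1 h2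
      haveI hpe : (IsoComma.p f).IsEquivalence :=
        (IsoComma.equiv f).isEquivalence_functor
      refine ⟨?_, ?_, ?_⟩
      · rw [← hp]; infer_instance
      · show Isofib' a'
        rw [← hp]
        exact isofib_comp η θ h1 h2 _ (isofib_p f)
      · show DiscIsofib' (a'.prod' b')
        have hab : a'.prod' b' = η ⋙ ((IsoComma.p f).prod' (IsoComma.q f)) := by
          rw [← hp, ← hq]; rfl
        rw [hab]
        exact disc_comp η θ h1 h2 _ (discrete_pq f)
    · rintro ⟨ha', hfib', hd'⟩
      obtain ⟨s', hs'⟩ := exists_section a' ha' hfib'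
      obtain ⟨η, θ, h1, h2, hp, hq⟩ := main_span a' b' ha' s' hs' hd'
      exact ⟨s' ⋙ b', η, θ, h1, h2, hp, hq⟩
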